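/- arXiv:2311.09038 — 2 statements merged into one kernel-verified Lean document; each statement's English description precedes it below -/
import Mathlib

section
/- There is an R-algebra isomorphism from the skew Hecke algebra H_R(G,H,A,α) onto the G-invariant subalgebra (A ⊗ End_R(R[G/H])^op)^G, given explicitly by φ ↦ Σ_{gH,kH} α_k(φ(k⁻¹gH)) ⊗ E_{gH,kH}, where E_{gH,kH} is the R-linear map sending kH to gH and all other cosets to 0. -/
open scoped BigOperators TensorProduct

/-!
Send `a ⊗ T` to the matrix whose row `i` is `a` times the coordinates of `T (single i 1)`.
Because rows are indexed by the source coset, composition in `End_R(R[G/H])ᵐᵒᵖ` becomes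
ordinary matrix multiplication, so `A ⊗ End_R(R[G/H])ᵐᵒᵖ ≅ Matrix (G/H) (G/H) A` as algebras.
The diagonal `G`-action turns into `M ↦ α_g ∘ M (g⁻¹ ·) (g⁻¹ ·)`, and `e φ` into the matrix
with `(kH, gH)` entry `α_k (φ (k⁻¹gH))`. When `φ` is `H`-equivariant, this entry does not
depend on the representative `k`, so the matrix is `G`-invariant and its row at the trivial
coset is `φ`. Conversely, the row of a `G`-invariant matrix at the trivial coset is
`H`-equivariant and gives back the matrix. After reindexing by `c ↦ s(D) c`, the twisted
convolution becomes matrix multiplication.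
-/

def SkewHecke.IsInv {R A G : Type*} [CommRing R] [Ring A] [Algebra R A] [Group G]
    (H : Subgroup G) (α : G →* (A ≃ₐ[R] A)) (φ : G ⧸ H → A) : Prop :=
  ∀ h ∈ H, ∀ g : G, φ (QuotientGroup.mk (h * g)) = α h (φ (QuotientGroup.mk g))

def SkewHecke.IsSection {G : Type*} [Group G] {H : Subgroup G} (s : G ⧸ H → G) : Prop :=
  ∀ c : G ⧸ H, QuotientGroup.mk (s c) = c

noncomputable def SkewHecke.conv {R A G : Type*} [CommRing R] [Ring A] [Algebra R A] [Group G]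
    (H : Subgroup G) [Fintype (G ⧸ H)] (α : G →* (A ≃ₐ[R] A))
    (s : G ⧸ H → G) (φ ψ : G ⧸ H → A) : G ⧸ H → A :=
  fun x => ∑ c : G ⧸ H, φ c * α (s c) (ψ ((s c)⁻¹ • x))

noncomputable def SkewHecke.delta {A G : Type*} [Ring A] [Group G] (H : Subgroup G)
    (a : A) : G ⧸ H → A := by
  classical exact fun x => if x = QuotientGroup.mk (1 : G) then a else 0

/-- Left translation by `g` on the free module `R[G/H]`. -/
noncomputable def SkewHecke.P (R : Type*) {G : Type*} [CommRing R] [Group G]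
    (H : Subgroup G) (g : G) : ((G ⧸ H) →₀ R) →ₗ[R] ((G ⧸ H) →₀ R) :=
  Finsupp.lmapDomain R R (fun c => g • c)

/-- The matrix unit `E_{c,d} : R[G/H] → R[G/H]`, sending `d` to `c` and other cosets to 0. -/
noncomputable def SkewHecke.matUnit (R : Type*) {G : Type*} [CommRing R] [Group G]
    (H : Subgroup G) (c d : G ⧸ H) : Module.End R ((G ⧸ H) →₀ R) :=
  (Finsupp.lsingle c).comp (Finsupp.lapply d)

/-- Conjugation by `g` on `End_R(R[G/H])`, `T ↦ P_g ∘ T ∘ P_{g⁻¹}`. -/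
noncomputable def SkewHecke.conjE (R : Type*) {G : Type*} [CommRing R] [Group G]
    (H : Subgroup G) (g : G) :
    Module.End R ((G ⧸ H) →₀ R) →ₗ[R] Module.End R ((G ⧸ H) →₀ R) :=
  (LinearMap.llcomp R _ _ _ (SkewHecke.P R H g)).comp
    (LinearMap.lcomp R _ (SkewHecke.P R H g⁻¹))

/-- The diagonal action of `g` on `A ⊗ End_R(R[G/H])^op`. -/
noncomputable def SkewHecke.actT {R A G : Type*} [CommRing R] [Ring A] [Algebra R A]
    [Group G] (H : Subgroup G) (α : G →* (A ≃ₐ[R] A)) (g : G) :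
    (A ⊗[R] (Module.End R ((G ⧸ H) →₀ R))ᵐᵒᵖ) →ₗ[R]
      (A ⊗[R] (Module.End R ((G ⧸ H) →₀ R))ᵐᵒᵖ) :=
  TensorProduct.map (α g).toLinearMap
    ((MulOpposite.opLinearEquiv R).toLinearMap.comp
      ((SkewHecke.conjE R H g).comp (MulOpposite.opLinearEquiv R).symm.toLinearMap))

section TensorEndOp

open scoped Matrix

variable (R A X : Type*) [CommRing R] [Ring A] [Algebra R A] [Fintype X] [DecidableEq X]

noncomputable def tensorEndOpEquivMatrix :
    A ⊗[R] (Module.End R (X →₀ R))ᵐᵒᵖ ≃ₐ[R] Matrix X X A :=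
  (Algebra.TensorProduct.congr AlgEquiv.refl
    ((AlgEquiv.op (LinearMap.toMatrixAlgEquiv (Finsupp.basisSingleOne (R := R) (ι := X)))).trans
      (Matrix.transposeAlgEquiv X R R).symm)).trans
    (matrixEquivTensor X R A).symm

variable {R A X}

theorem tensorEndOpEquivMatrix_tmul (a : A) (T : Module.End R (X →₀ R)) (i j : X) :
    tensorEndOpEquivMatrix R A X (a ⊗ₜ MulOpposite.op T) i j = T (Finsupp.single i 1) j • a := by
  simp [tensorEndOpEquivMatrix, LinearMap.toMatrixAlgEquiv_apply, Algebra.smul_def,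
    Algebra.commutes]

theorem tensorEndOpEquivMatrix_sum_tmul (F : X → X → A) :
    tensorEndOpEquivMatrix R A X (∑ c, ∑ d,
      F c d ⊗ₜ MulOpposite.op (Finsupp.lsingle c ∘ₗ Finsupp.lapply d)) = (Matrix.of F)ᵀ := by
  ext i j
  simp [Matrix.sum_apply, tensorEndOpEquivMatrix_tmul, Finsupp.single_apply]

end TensorEndOp

namespace SkewHecke

variable {R A G : Type*} [CommRing R] [Ring A] [Algebra R A] [Group G] {H : Subgroup G}

theorem P_single (g : G) (x : G ⧸ H) (r : R) :
    P R H g (Finsupp.single x r) = Finsupp.single (g • x) r :=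
  Finsupp.mapDomain_single

theorem P_apply (g : G) (f : (G ⧸ H) →₀ R) (x : G ⧸ H) : P R H g f x = f (g⁻¹ • x) := by
  simpa [P] using Finsupp.mapDomain_apply (MulAction.injective g) f (g⁻¹ • x)

theorem conjE_apply_single (g : G) (T : Module.End R ((G ⧸ H) →₀ R)) (x : G ⧸ H) (r : R) :
    conjE R H g T (Finsupp.single x r) = P R H g (T (Finsupp.single (g⁻¹ • x) r)) := by
  simp [conjE, P_single]

variable (α : G →* (A ≃ₐ[R] A))

def IsEquivariant (M : Matrix (G ⧸ H) (G ⧸ H) A) : Prop :=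
  ∀ (g : G) (i j : G ⧸ H), M (g • i) (g • j) = α g (M i j)

section Invariants

variable [Fintype (G ⧸ H)] [DecidableEq (G ⧸ H)]

theorem tensorEndOpEquivMatrix_actT (g : G) (t : A ⊗[R] (Module.End R ((G ⧸ H) →₀ R))ᵐᵒᵖ)
    (i j : G ⧸ H) :
    tensorEndOpEquivMatrix R A (G ⧸ H) (actT H α g t) i j =
      α g (tensorEndOpEquivMatrix R A (G ⧸ H) t (g⁻¹ • i) (g⁻¹ • j)) := by
  induction t with
  | zero => simp
  | add t u ht hu => simp [ht, hu]
  | tmul a T =>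
    induction T using MulOpposite.rec' with
    | _ T =>
    change tensorEndOpEquivMatrix R A (G ⧸ H) (α g a ⊗ₜ MulOpposite.op (conjE R H g T)) i j = _
    rw [tensorEndOpEquivMatrix_tmul, tensorEndOpEquivMatrix_tmul, conjE_apply_single, P_apply,
      LinearMapClass.map_smul]

theorem forall_actT_eq_self_iff (t : A ⊗[R] (Module.End R ((G ⧸ H) →₀ R))ᵐᵒᵖ) :
    (∀ g, actT H α g t = t) ↔ IsEquivariant α (tensorEndOpEquivMatrix R A (G ⧸ H) t) := by
  constructor
  · intro ht g i j
    conv_lhs => rw [← ht g]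
    rw [tensorEndOpEquivMatrix_actT, inv_smul_smul, inv_smul_smul]
  · intro hM g
    apply (tensorEndOpEquivMatrix R A (G ⧸ H)).injective
    ext i j
    rw [tensorEndOpEquivMatrix_actT, ← hM, smul_inv_smul, smul_inv_smul]

end Invariants

variable {α} {φ : G ⧸ H → A}

theorem IsInv.smul_apply (hφ : IsInv H α φ) {h : G} (hh : h ∈ H) (x : G ⧸ H) :
    φ (h • x) = α h (φ x) := by
  induction x using QuotientGroup.induction_on with
  | H g => exact hφ h hh g

theorem IsInv.translate_mul (hφ : IsInv H α φ) (k : G) {h : G} (hh : h ∈ H) (x : G ⧸ H) :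
    α (k * h) (φ ((k * h)⁻¹ • x)) = α k (φ (k⁻¹ • x)) := by
  rw [map_mul, AlgEquiv.mul_apply, ← hφ.smul_apply hh, mul_inv_rev, mul_smul, smul_inv_smul]

theorem IsInv.translate_eq_of_mk_eq (hφ : IsInv H α φ) {k k' : G}
    (hk : (k : G ⧸ H) = k') (x : G ⧸ H) :
    α k (φ (k⁻¹ • x)) = α k' (φ (k'⁻¹ • x)) := by
  rw [← hφ.translate_mul k (QuotientGroup.eq.mp hk), mul_inv_cancel_left]

variable {s : G ⧸ H → G}

theorem IsSection.mk_mul (hs : IsSection s) (g : G) (d : G ⧸ H) :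
    ((g * s d : G) : G ⧸ H) = g • d :=
  congrArg (g • ·) (hs d)

theorem IsSection.smul_mk_one (hs : IsSection s) (d : G ⧸ H) : s d • ((1 : G) : G ⧸ H) = d := by
  rw [MulAction.Quotient.smul_coe, smul_eq_mul, mul_one, hs d]

variable (α s) in
noncomputable def heckeMatrix : (G ⧸ H → A) →ₗ[R] Matrix (G ⧸ H) (G ⧸ H) A where
  toFun φ := Matrix.of fun d c => α (s d) (φ ((s d)⁻¹ • c))
  map_add' φ ψ := by ext; simp
  map_smul' r φ := by ext; simp

theorem heckeMatrix_apply (d c : G ⧸ H) :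
    heckeMatrix α s φ d c = α (s d) (φ ((s d)⁻¹ • c)) := rfl

theorem heckeMatrix_apply_of_mk_eq (hs : IsSection s) (hφ : IsInv H α φ) {k : G} {d : G ⧸ H}
    (hk : (k : G ⧸ H) = d) (c : G ⧸ H) :
    heckeMatrix α s φ d c = α k (φ (k⁻¹ • c)) :=
  hφ.translate_eq_of_mk_eq ((hs d).trans hk.symm) c

theorem heckeMatrix_mk_one (hs : IsSection s) (hφ : IsInv H α φ) :
    heckeMatrix α s φ ((1 : G) : G ⧸ H) = φ := by
  ext c
  simp [heckeMatrix_apply_of_mk_eq hs hφ rfl]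

theorem isEquivariant_heckeMatrix (hs : IsSection s) (hφ : IsInv H α φ) :
    IsEquivariant α (heckeMatrix α s φ) := by
  intro g d c
  rw [heckeMatrix_apply_of_mk_eq hs hφ (hs.mk_mul g d), map_mul, AlgEquiv.mul_apply, mul_inv_rev,
    mul_smul, inv_smul_smul, heckeMatrix_apply]

theorem isInv_row_mk_one {M : Matrix (G ⧸ H) (G ⧸ H) A} (hM : IsEquivariant α M) :
    IsInv H α (M ((1 : G) : G ⧸ H)) := by
  intro h hh g
  have hfix : h • ((1 : G) : G ⧸ H) = ((1 : G) : G ⧸ H) := by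
    simp [QuotientGroup.eq, hh]
  rw [← hM h, hfix]
  rfl

theorem heckeMatrix_row_mk_one (hs : IsSection s) {M : Matrix (G ⧸ H) (G ⧸ H) A}
    (hM : IsEquivariant α M) : heckeMatrix α s (M ((1 : G) : G ⧸ H)) = M := by
  ext d c
  rw [heckeMatrix_apply, ← hM, smul_inv_smul, hs.smul_mk_one]

theorem bijOn_heckeMatrix (hs : IsSection s) :
    Set.BijOn (heckeMatrix α s) {φ | IsInv H α φ} {M | IsEquivariant α M} where
  left _ hφ := isEquivariant_heckeMatrix hs hφ
  right.left φ hφ ψ hψ h := by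
    rw [← heckeMatrix_mk_one hs hφ, h, heckeMatrix_mk_one hs hψ]
  right.right M hM := ⟨_, isInv_row_mk_one hM, heckeMatrix_row_mk_one hs hM⟩

theorem heckeMatrix_conv [Fintype (G ⧸ H)] (hs : IsSection s) {ψ : G ⧸ H → A}
    (hψ : IsInv H α ψ) :
    heckeMatrix α s (conv H α s φ ψ) = heckeMatrix α s φ * heckeMatrix α s ψ := by
  ext D C
  rw [Matrix.mul_apply, heckeMatrix_apply, conv, map_sum]
  refine Fintype.sum_bijective (s D • ·) (MulAction.bijective (s D)) _ _ fun c => ?_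
  rw [map_mul, heckeMatrix_apply, inv_smul_smul,
    heckeMatrix_apply_of_mk_eq hs hψ (hs.mk_mul (s D) c), ← AlgEquiv.mul_apply, ← map_mul,
    mul_inv_rev, mul_smul]

theorem heckeMatrix_delta_one [DecidableEq (G ⧸ H)] (hs : IsSection s) :
    heckeMatrix α s (delta H (1 : A)) = 1 := by
  ext d c
  have hc : (s d)⁻¹ • c = ((1 : G) : G ⧸ H) ↔ d = c := by
    rw [inv_smul_eq_iff, hs.smul_mk_one, eq_comm]
  simp only [heckeMatrix_apply, delta, Matrix.one_apply, hc]
  split_ifs <;> simp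

end SkewHecke

/-- The map `φ ↦ Σ_{gH,kH} α_k(φ(k⁻¹gH)) ⊗ E_{gH,kH}` is an `R`-algebra isomorphism from
the skew Hecke algebra `H_R(G,H,A,α)` onto the `G`-invariant subalgebra
`(A ⊗ End_R(R[G/H])^op)^G`. -/
theorem skewHecke_iso_tensor_end_op_invariants {R A G : Type*} [CommRing R] [Ring A]
    [Algebra R A] [Group G] (H : Subgroup G) [Fintype (G ⧸ H)]
    (α : G →* (A ≃ₐ[R] A)) (s : G ⧸ H → G) (hs : SkewHecke.IsSection s) :
    let e : (G ⧸ H → A) → (A ⊗[R] (Module.End R ((G ⧸ H) →₀ R))ᵐᵒᵖ) :=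
      fun φ => ∑ c : G ⧸ H, ∑ d : G ⧸ H,
        α (s d) (φ ((s d)⁻¹ • c)) ⊗ₜ[R] MulOpposite.op (SkewHecke.matUnit R H c d)
    -- `e` is a bijection from the skew Hecke algebra onto the `G`-invariants
    Set.BijOn e {φ | SkewHecke.IsInv H α φ}
      {t | ∀ g : G, SkewHecke.actT H α g t = t} ∧
    -- `e` is `R`-linear
    (∀ φ ψ : G ⧸ H → A, e (φ + ψ) = e φ + e ψ) ∧
    (∀ (r : R) (φ : G ⧸ H → A), e (r • φ) = r • e φ) ∧
    -- `e` is multiplicative and unital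
    (∀ φ ψ : G ⧸ H → A, SkewHecke.IsInv H α φ → SkewHecke.IsInv H α ψ →
      e (SkewHecke.conv H α s φ ψ) = e φ * e ψ) ∧
    e (SkewHecke.delta H (1 : A)) = 1 := by
  classical
  intro e
  set Ψ := tensorEndOpEquivMatrix R A (G ⧸ H)
  have he : e = Ψ.symm ∘ SkewHecke.heckeMatrix α s :=
    funext fun φ => Ψ.eq_symm_apply.mpr (tensorEndOpEquivMatrix_sum_tmul _)
  have hΨ : Set.BijOn Ψ.symm {M | SkewHecke.IsEquivariant α M}
      {t | ∀ g : G, SkewHecke.actT H α g t = t} :=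
    Ψ.symm.toEquiv.bijOn fun M => by simp [SkewHecke.forall_actT_eq_self_iff, Ψ]
  rw [he]
  simp only [Function.comp_apply]
  refine ⟨hΨ.comp (SkewHecke.bijOn_heckeMatrix hs), fun φ ψ => by simp only [map_add],
    fun r φ => by simp only [map_smul], fun φ ψ _ hψ => ?_, ?_⟩
  · rw [SkewHecke.heckeMatrix_conv hs hψ, map_mul]
  · rw [SkewHecke.heckeMatrix_delta_one hs, map_one]
end

section
/- If K is a subgroup with H ≤ K ≤ G, then extension of functions by zero (via the inclusion K/H ↪ G/H) defines an injective R-algebra homomorphism from H_R(K,H,A,α|_K) into H_R(G,H,A,α). -/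
open scoped BigOperators

/-! The inclusion `K/H ↪ G/H` is `K`-equivariant with `K`-stable image, so extension by zero
preserves `H`-invariance. In the convolution over `G/H` only cosets inside `K/H` contribute, and
there the representative chosen in `G` may be replaced by the one chosen in `K`: for `H`-invariant
`ψ` the term `α g (ψ (g⁻¹ • x))` depends only on the coset `gH`. -/

namespace SkewHecke

section QuotientInclusion

variable {G : Type*} [Group G] (K H : Subgroup G)

def quotientInclusion : K ⧸ H.subgroupOf K → G ⧸ H :=
  Quotient.map' Subtype.val fun _ _ hab => by rwa [QuotientGroup.leftRel_apply] at hab ⊢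

@[simp]
theorem quotientInclusion_mk (k : K) :
    quotientInclusion K H (QuotientGroup.mk k) = QuotientGroup.mk (k : G) :=
  rfl

variable {K H}

theorem quotientInclusion_injective : Function.Injective (quotientInclusion K H) := by
  refine Quotient.ind₂' fun a b (hab : ((a : G) : G ⧸ H) = b) => ?_
  exact QuotientGroup.eq.mpr (Subgroup.mem_subgroupOf.mpr (QuotientGroup.eq.mp hab))

theorem quotientInclusion_smul (k : K) (y : K ⧸ H.subgroupOf K) :
    quotientInclusion K H (k • y) = (k : G) • quotientInclusion K H y :=
  QuotientGroup.induction_on y fun _ => rfl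

theorem smul_mem_range_quotientInclusion_iff {k : G} (hk : k ∈ K) (x : G ⧸ H) :
    k • x ∈ Set.range (quotientInclusion K H) ↔ x ∈ Set.range (quotientInclusion K H) := by
  constructor
  · rintro ⟨y, hy⟩
    refine ⟨(⟨k, hk⟩ : K)⁻¹ • y, ?_⟩
    rw [quotientInclusion_smul, hy, Subgroup.coe_inv, inv_smul_smul]
  · rintro ⟨y, rfl⟩
    exact ⟨(⟨k, hk⟩ : K) • y, quotientInclusion_smul _ y⟩

end QuotientInclusion

variable {R A G : Type*} [CommRing R] [Ring A] [Algebra R A] [Group G]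

theorem IsInv.apply_smul {H : Subgroup G} {α : G →* (A ≃ₐ[R] A)} {φ : G ⧸ H → A}
    (hφ : IsInv H α φ) {h : G} (hh : h ∈ H) (x : G ⧸ H) : φ (h • x) = α h (φ x) :=
  QuotientGroup.induction_on x (hφ h hh)

theorem IsInv.map_apply_inv_smul_of_mk_eq {H : Subgroup G} {α : G →* (A ≃ₐ[R] A)}
    {ψ : G ⧸ H → A} (hψ : IsInv H α ψ) {g g' : G} (hgg' : (g : G ⧸ H) = g') (x : G ⧸ H) :
    α g' (ψ (g'⁻¹ • x)) = α g (ψ (g⁻¹ • x)) := by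
  have hh : g⁻¹ * g' ∈ H := QuotientGroup.eq.mp hgg'
  have hg' : g' = g * (g⁻¹ * g') := (mul_inv_cancel_left g g').symm
  calc α g' (ψ (g'⁻¹ • x))
      = α g' (ψ ((g⁻¹ * g')⁻¹ • g⁻¹ • x)) := by rw [smul_smul, ← mul_inv_rev, ← hg']
    _ = α (g' * (g⁻¹ * g')⁻¹) (ψ (g⁻¹ • x)) := by
        rw [hψ.apply_smul (H.inv_mem hh), map_mul, AlgEquiv.mul_apply]
    _ = α g (ψ (g⁻¹ • x)) := by rw [mul_inv_rev, inv_inv, mul_inv_cancel_left]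

variable {K H : Subgroup G}

variable (K H) in
noncomputable def extendByZero (φ : K ⧸ H.subgroupOf K → A) : G ⧸ H → A :=
  Function.extend (quotientInclusion K H) φ 0

@[simp]
theorem extendByZero_apply_quotientInclusion (φ : K ⧸ H.subgroupOf K → A)
    (y : K ⧸ H.subgroupOf K) : extendByZero K H φ (quotientInclusion K H y) = φ y :=
  quotientInclusion_injective.extend_apply φ 0 y

theorem extendByZero_apply_of_notMem_range (φ : K ⧸ H.subgroupOf K → A) {x : G ⧸ H}
    (hx : x ∉ Set.range (quotientInclusion K H)) : extendByZero K H φ x = 0 :=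
  Function.extend_apply' (f := quotientInclusion K H) φ 0 x hx

theorem extendByZero_injective : Function.Injective (extendByZero (A := A) K H) :=
  Function.extend_injective quotientInclusion_injective (0 : G ⧸ H → A)

theorem extendByZero_add (φ ψ : K ⧸ H.subgroupOf K → A) :
    extendByZero K H (φ + ψ) = extendByZero K H φ + extendByZero K H ψ := by
  simpa [extendByZero] using Function.extend_add (quotientInclusion K H) φ ψ 0 0

theorem extendByZero_smul (r : R) (φ : K ⧸ H.subgroupOf K → A) :
    extendByZero K H (r • φ) = r • extendByZero K H φ := by
  simpa [extendByZero] using Function.extend_smul r (quotientInclusion K H) φ 0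

variable {α : G →* (A ≃ₐ[R] A)}

theorem isInv_extendByZero (hHK : H ≤ K) {φ : K ⧸ H.subgroupOf K → A}
    (hφ : IsInv (H.subgroupOf K) (α.comp K.subtype) φ) : IsInv H α (extendByZero K H φ) := by
  intro h hh g
  change extendByZero K H φ (h • (g : G ⧸ H)) = _
  by_cases hg : (g : G ⧸ H) ∈ Set.range (quotientInclusion K H)
  · obtain ⟨y, hy⟩ := hg
    rw [← hy, ← show quotientInclusion K H ((⟨h, hHK hh⟩ : K) • y) = h • _ from
      quotientInclusion_smul _ y, extendByZero_apply_quotientInclusion,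
      extendByZero_apply_quotientInclusion]
    exact hφ.apply_smul (Subgroup.mem_subgroupOf.mpr hh) y
  · have hhg := (smul_mem_range_quotientInclusion_iff (hHK hh) (g : G ⧸ H)).not.mpr hg
    rw [extendByZero_apply_of_notMem_range _ hg, extendByZero_apply_of_notMem_range _ hhg,
      map_zero]

theorem extendByZero_conv [Fintype (G ⧸ H)] [Fintype (K ⧸ H.subgroupOf K)] (hHK : H ≤ K)
    {sG : G ⧸ H → G} (hsG : IsSection sG) {sK : K ⧸ H.subgroupOf K → K} (hsK : IsSection sK)
    (φ : K ⧸ H.subgroupOf K → A) {ψ : K ⧸ H.subgroupOf K → A}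
    (hψ : IsInv (H.subgroupOf K) (α.comp K.subtype) ψ) :
    extendByZero K H (conv (H.subgroupOf K) (α.comp K.subtype) sK φ ψ) =
      conv H α sG (extendByZero K H φ) (extendByZero K H ψ) := by
  funext x
  have hsum : conv H α sG (extendByZero K H φ) (extendByZero K H ψ) x =
      ∑ y, φ y * α (sK y) (extendByZero K H ψ ((sK y : G)⁻¹ • x)) := by
    refine (Fintype.sum_of_injective _ quotientInclusion_injective _ _
      (fun c hc => ?_) fun y => ?_).symm
    · rw [extendByZero_apply_of_notMem_range _ hc, zero_mul]
    · have hmk : ((sK y : G) : G ⧸ H) = sG (quotientInclusion K H y) := by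
        rw [hsG, ← quotientInclusion_mk, hsK]
      rw [extendByZero_apply_quotientInclusion,
        (isInv_extendByZero hHK hψ).map_apply_inv_smul_of_mk_eq hmk]
  rw [hsum]
  by_cases hx : x ∈ Set.range (quotientInclusion K H)
  · obtain ⟨z, rfl⟩ := hx
    refine (extendByZero_apply_quotientInclusion _ z).trans (Finset.sum_congr rfl fun y _ => ?_)
    rw [← Subgroup.coe_inv, ← quotientInclusion_smul, extendByZero_apply_quotientInclusion]
    rfl
  · have hyx (y : K ⧸ H.subgroupOf K) : (sK y : G)⁻¹ • x ∉ Set.range (quotientInclusion K H) :=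
      (smul_mem_range_quotientInclusion_iff (K.inv_mem (sK y).2) x).not.mpr hx
    rw [extendByZero_apply_of_notMem_range _ hx]
    refine (Finset.sum_eq_zero fun y _ => ?_).symm
    rw [extendByZero_apply_of_notMem_range _ (hyx y), map_zero, mul_zero]

theorem extendByZero_delta (a : A) :
    extendByZero K H (delta (H.subgroupOf K) a) = delta H a := by
  classical
  funext x
  by_cases hx : x ∈ Set.range (quotientInclusion K H)
  · obtain ⟨y, rfl⟩ := hx
    rw [extendByZero_apply_quotientInclusion, delta, delta, ← OneMemClass.coe_one K,
      ← quotientInclusion_mk]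
    exact if_congr quotientInclusion_injective.eq_iff.symm rfl rfl
  · rw [extendByZero_apply_of_notMem_range _ hx, delta, if_neg]
    rintro rfl
    exact hx ⟨QuotientGroup.mk 1, rfl⟩

end SkewHecke

/-- For `H ≤ K ≤ G`, extension of functions by zero along the inclusion `K/H ↪ G/H` is an
injective `R`-algebra homomorphism `H_R(K,H,A,α|_K) → H_R(G,H,A,α)`. -/
theorem skewHecke_intermediate_subgroup_embedding {R A G : Type*} [CommRing R] [Ring A]
    [Algebra R A] [Group G] (K H : Subgroup G) (hHK : H ≤ K)
    [Fintype (G ⧸ H)] [Fintype (K ⧸ H.subgroupOf K)]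
    (α : G →* (A ≃ₐ[R] A))
    (sG : G ⧸ H → G) (hsG : SkewHecke.IsSection sG)
    (sK : K ⧸ H.subgroupOf K → K) (hsK : SkewHecke.IsSection sK) :
    ∃ (ι : K ⧸ H.subgroupOf K → G ⧸ H) (E : (K ⧸ H.subgroupOf K → A) → (G ⧸ H → A)),
      -- `ι` is the natural injection `K/H ↪ G/H`
      (∀ k : K, ι (QuotientGroup.mk k) = QuotientGroup.mk (k : G)) ∧
      Function.Injective ι ∧
      -- `E` is extension by zero
      (∀ (φ : K ⧸ H.subgroupOf K → A) (y : K ⧸ H.subgroupOf K), E φ (ι y) = φ y) ∧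
      (∀ (φ : K ⧸ H.subgroupOf K → A) (x : G ⧸ H), x ∉ Set.range ι → E φ x = 0) ∧
      -- `E` maps the smaller skew Hecke algebra into the larger one, injectively
      (∀ φ, SkewHecke.IsInv (H.subgroupOf K) (α.comp K.subtype) φ →
        SkewHecke.IsInv H α (E φ)) ∧
      Set.InjOn E {φ | SkewHecke.IsInv (H.subgroupOf K) (α.comp K.subtype) φ} ∧
      -- `E` is `R`-linear on invariant functions
      (∀ φ ψ, SkewHecke.IsInv (H.subgroupOf K) (α.comp K.subtype) φ →
        SkewHecke.IsInv (H.subgroupOf K) (α.comp K.subtype) ψ →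
        E (φ + ψ) = E φ + E ψ) ∧
      (∀ (r : R) (φ), SkewHecke.IsInv (H.subgroupOf K) (α.comp K.subtype) φ →
        E (r • φ) = r • E φ) ∧
      -- `E` is multiplicative and unital
      (∀ φ ψ, SkewHecke.IsInv (H.subgroupOf K) (α.comp K.subtype) φ →
        SkewHecke.IsInv (H.subgroupOf K) (α.comp K.subtype) ψ →
        E (SkewHecke.conv (H.subgroupOf K) (α.comp K.subtype) sK φ ψ) =
          SkewHecke.conv H α sG (E φ) (E ψ)) ∧
      E (SkewHecke.delta (H.subgroupOf K) (1 : A)) = SkewHecke.delta H (1 : A) := by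
  exact ⟨SkewHecke.quotientInclusion K H, SkewHecke.extendByZero K H, fun _ => rfl,
    SkewHecke.quotientInclusion_injective, SkewHecke.extendByZero_apply_quotientInclusion,
    fun φ _ hx => SkewHecke.extendByZero_apply_of_notMem_range φ hx,
    fun _ hφ => SkewHecke.isInv_extendByZero hHK hφ,
    SkewHecke.extendByZero_injective.injOn,
    fun φ ψ _ _ => SkewHecke.extendByZero_add φ ψ,
    fun r φ _ => SkewHecke.extendByZero_smul r φ,
    fun φ _ _ hψ => SkewHecke.extendByZero_conv hHK hsG hsK φ hψ,
    SkewHecke.extendByZero_delta 1⟩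
end
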